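/- Let G and G' be locally equivalent simple graphs on vertex set V (i.e., G' is obtained from G by a finite sequence of local complementations). Then for all X ⊆ V, the rank over GF(2) of A(G')[X, V∖X] equals the rank of A(G)[X, V∖X]. -/

import Mathlib

open Matrix
open scoped symmDiff

variable {V F : Type*} [Fintype V] [DecidableEq V] [Field F]

/-- Nullity of a matrix: dimension of the kernel of the associated linear map. -/
noncomputable def nullity {F : Type*} [Field F] {m n : Type*} [Fintype m] [Fintype n]
    (M : Matrix m n F) : ℕ :=
  Module.finrank F (LinearMap.ker M.mulVecLin)

/-- Submatrix A[X,Y]: rows indexed by X, columns by Y. -/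
def subm (A : Matrix V V F) (X Y : Finset V) : Matrix X Y F :=
  A.submatrix Subtype.val Subtype.val

/-- Principal pivot transform of A on Z, defined blockwise. -/
noncomputable def ppt (A : Matrix V V F) (Z : Finset V) : Matrix V V F :=
  fun i j =>
    if hi : i ∈ Z then
      if hj : j ∈ Z then (subm A Z Z)⁻¹ ⟨i, hi⟩ ⟨j, hj⟩
      else - ∑ k : Z, (subm A Z Z)⁻¹ ⟨i, hi⟩ k * A k j
    else
      if hj : j ∈ Z then ∑ k : Z, A i k * (subm A Z Z)⁻¹ k ⟨j, hj⟩
      else A i j - ∑ k : Z, ∑ l : Z, A i k * (subm A Z Z)⁻¹ k l * A l j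

/-- Local complement of a simple graph G at a vertex v: complement the subgraph
induced on the neighborhood of v. -/
def localComp {V : Type*} (G : SimpleGraph V) (v : V) : SimpleGraph V where
  Adj a b := a ≠ b ∧ Xor' (G.Adj a b) (G.Adj v a ∧ G.Adj v b)
  symm := ⟨by
    rintro a b ⟨hne, h⟩
    refine ⟨hne.symm, ?_⟩
    rwa [G.adj_comm b a, and_comm]⟩
  loopless := ⟨by rintro a ⟨h, -⟩; exact h rfl⟩

instance {V : Type*} [DecidableEq V] (G : SimpleGraph V) [DecidableRel G.Adj] (v : V) :
    DecidableRel (localComp G v).Adj :=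
  fun a b => decidable_of_iff (a ≠ b ∧ ((G.Adj a b ∧ ¬(G.Adj v a ∧ G.Adj v b)) ∨
    ((G.Adj v a ∧ G.Adj v b) ∧ ¬G.Adj a b))) Iff.rfl

/-- G and G' are locally equivalent if G' is obtained from G by a (possibly empty)
sequence of local complementations. -/
def LocallyEquivalent {V : Type*} (G G' : SimpleGraph V) : Prop :=
  Relation.ReflTransGen (fun H H' => ∃ v, H' = localComp H v) G G'

/-!
Off the diagonal, a local complementation at `v` adds to the adjacency matrix over GF(2) the
rank-one matrix `a aᵀ`, where `a` is the row of `v`. On the cut `X × Xᶜ`, the restriction of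
`a` to `Xᶜ` is itself the row of `v` in the cut matrix when `v ∈ X`, and its restriction to `X`
is the column of `v` when `v ∉ X`. Either way the change is one elementary row or column
operation, which preserves rank; it is invertible because the multiplier `a_v` of the pivot row
or column is `0`, `G` being loopless.
-/

namespace Matrix

variable {m n R : Type*} [CommRing R]

theorem rank_add_vecMulVec_row [Fintype m] [Fintype n] [DecidableEq m] (M : Matrix m n R)
    (c : m → R) (i : m) (hc : c i = 0) : (M + vecMulVec c (M.row i)).rank = M.rank := by
  have hE : IsUnit (1 + vecMulVec c (Pi.single i 1)).det := by
    rw [vecMulVec_eq Unit, det_one_add_replicateCol_mul_replicateRow, single_one_dotProduct, hc,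
      add_zero]
    exact isUnit_one
  rw [← rank_mul_eq_right_of_isUnit_det _ M hE, Matrix.add_mul, Matrix.one_mul, vecMulVec_mul,
    single_one_vecMul]

theorem rank_add_vecMulVec_col [Fintype n] [DecidableEq n] (M : Matrix m n R) (r : n → R)
    (j : n) (hr : r j = 0) : (M + vecMulVec (M.col j) r).rank = M.rank := by
  have hE : IsUnit (1 + vecMulVec (Pi.single j 1) r).det := by
    rw [vecMulVec_eq Unit, det_one_add_replicateCol_mul_replicateRow, dotProduct_single_one, hr,
      add_zero]
    exact isUnit_one
  rw [← rank_mul_eq_left_of_isUnit_det _ M hE, Matrix.mul_add, Matrix.mul_one, mul_vecMulVec,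
    mulVec_single_one]

end Matrix

open SimpleGraph

theorem adjMatrix_localComp_apply {V : Type*} (G : SimpleGraph V) [DecidableRel G.Adj]
    (v : V) [DecidableRel (localComp G v).Adj] {a b : V} (hab : a ≠ b) :
    (localComp G v).adjMatrix (ZMod 2) a b =
      G.adjMatrix (ZMod 2) a b + G.adjMatrix (ZMod 2) v a * G.adjMatrix (ZMod 2) v b := by
  have hadj : (localComp G v).Adj a b ↔ Xor (G.Adj a b) (G.Adj v a ∧ G.Adj v b) :=
    and_iff_right hab
  classical
  simp only [adjMatrix_apply, hadj]
  by_cases hGab : G.Adj a b <;> by_cases hva : G.Adj v a <;> by_cases hvb : G.Adj v b <;>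
    simp [hGab, hva, hvb, Xor, CharTwo.add_self_eq_zero]

theorem subm_adjMatrix_localComp {V : Type*} [Fintype V] [DecidableEq V]
    (G : SimpleGraph V) [DecidableRel G.Adj] (v : V) [DecidableRel (localComp G v).Adj]
    (X : Finset V) :
    subm ((localComp G v).adjMatrix (ZMod 2)) X Xᶜ =
      subm (G.adjMatrix (ZMod 2)) X Xᶜ +
        vecMulVec (fun i : X => G.adjMatrix (ZMod 2) v i)
          (fun j : (Xᶜ : Finset V) => G.adjMatrix (ZMod 2) v j) := by
  ext i j
  have hij : (i : V) ≠ j := fun h => Finset.mem_compl.1 j.2 (h ▸ i.2)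
  exact adjMatrix_localComp_apply G v hij

theorem rank_subm_adjMatrix_localComp {V : Type*} [Fintype V] [DecidableEq V]
    (G : SimpleGraph V) [DecidableRel G.Adj] (v : V) [DecidableRel (localComp G v).Adj]
    (X : Finset V) :
    (subm ((localComp G v).adjMatrix (ZMod 2)) X Xᶜ).rank =
      (subm (G.adjMatrix (ZMod 2)) X Xᶜ).rank := by
  rw [subm_adjMatrix_localComp]
  set M := subm (G.adjMatrix (ZMod 2)) X Xᶜ
  by_cases hv : v ∈ X
  · have hrow : (fun j : (Xᶜ : Finset V) => G.adjMatrix (ZMod 2) v j) = M.row ⟨v, hv⟩ := rfl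
    rw [hrow]
    exact rank_add_vecMulVec_row M _ ⟨v, hv⟩ (by simp)
  · have hcol : (fun i : X => G.adjMatrix (ZMod 2) v i) = M.col ⟨v, Finset.mem_compl.2 hv⟩ :=
      funext fun i => (G.isSymm_adjMatrix).apply i v
    rw [hcol]
    exact rank_add_vecMulVec_col M _ _ (by simp)

/-- The cut-rank over GF(2) is invariant under local equivalence (Bouchet). -/
theorem cutRank_locallyEquivalent {V : Type*} [Fintype V] [DecidableEq V]
    (G G' : SimpleGraph V) [DecidableRel G.Adj] [DecidableRel G'.Adj]
    (h : LocallyEquivalent G G') (X : Finset V) :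
    (subm (SimpleGraph.adjMatrix (ZMod 2) G') X Xᶜ).rank =
    (subm (SimpleGraph.adjMatrix (ZMod 2) G) X Xᶜ).rank := by
  revert ‹DecidableRel G'.Adj›
  induction h with
  | refl => intro _; congr!
  | tail _ hstep ih =>
    obtain ⟨v, rfl⟩ := hstep
    intro _
    classical
    rw [rank_subm_adjMatrix_localComp, ih]
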